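/- arXiv:1902.02852 — 3 statements merged into one kernel-verified Lean document; each statement's English description precedes it below -/
import Mathlib

section
/- Let p ∈ (0,1) and let X₁,…,Xₙ be independent, identically distributed geometric random variables with Pr[X = k] = p(1−p)^k for k = 0,1,2,…, and let μ = (1−p)/p be their common mean. Let X̄ₙ = (X₁+⋯+Xₙ)/n. Then for every λ ∈ (0,1), Pr[X̄ₙ ≤ λμ] ≤ exp(−n·H(λ,μ)), where H(λ,μ) = μλ·ln λ − (1+μλ)·ln((1+μλ)/(1+μ)). -/
/-!
Chernoff: for `t ≤ 0`, `P (S ≤ a) ≤ exp (-t a) M(t)ⁿ`, where `S` is the sum and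
`M(t) = p / (1 - (1 - p) eᵗ)` is the moment generating function of one geometric variable.
Choosing `eᵗ = λ / q` with `q = p + λ (1 - p) = (1 + μλ) / (1 + μ)` gives `M(t) = q`, and
`exp (-t nλμ) qⁿ = exp (-n H(λ, μ))`.
-/

open MeasureTheory ProbabilityTheory Real Filter

namespace ProbabilityTheory

lemma mgf_natCast_geometricMeasure {p : unitInterval} (hp : p ≠ 0) {t : ℝ}
    (ht : (1 - p) * exp t < 1) :
    mgf (fun n : ℕ ↦ (n : ℝ)) (geometricMeasure p) t = p / (1 - (1 - p) * exp t) := by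
  have hr : 0 ≤ (1 - p : ℝ) * exp t := mul_nonneg (sub_nonneg.2 p.2.2) (exp_pos t).le
  calc mgf (fun n : ℕ ↦ (n : ℝ)) (geometricMeasure p) t
      = ∑' n : ℕ, p * ((1 - p) * exp t) ^ n := by
        rw [mgf, integral_geometricMeasure hp]
        refine tsum_congr fun n ↦ ?_
        rw [smul_eq_mul, mul_comm t, exp_nat_mul, mul_pow]
        ring
    _ = p / (1 - (1 - p) * exp t) := by
        rw [tsum_mul_left, tsum_geometric_of_lt_one hr ht, div_eq_mul_inv]

variable {Ω : Type*} [MeasurableSpace Ω] {P : Measure Ω}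

lemma map_eq_geometricMeasure {p : unitInterval} (hp : p ≠ 0) {X : Ω → ℕ} (hX : Measurable X)
    (hdist : ∀ k, P {ω | X ω = k} = ENNReal.ofReal (p * (1 - p) ^ k)) :
    P.map X = geometricMeasure p :=
  Measure.ext_of_singleton fun k ↦ by
    rw [Measure.map_apply hX (measurableSet_singleton k), geometricMeasure_singleton hp,
      mul_comm]
    exact hdist k

lemma mgf_natCast_of_map_eq_geometricMeasure {p : unitInterval} (hp : p ≠ 0) {X : Ω → ℕ}
    (hX : Measurable X) (hlaw : P.map X = geometricMeasure p) {t : ℝ}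
    (ht : (1 - p) * exp t < 1) :
    mgf (fun ω ↦ (X ω : ℝ)) P t = p / (1 - (1 - p) * exp t) := by
  rw [← mgf_natCast_geometricMeasure hp ht, ← hlaw,
    mgf_map hX.aemeasurable (by fun_prop)]
  rfl

lemma integrable_exp_mul_of_nonpos_of_nonneg [IsFiniteMeasure P] {Y : Ω → ℝ}
    (hY : Measurable Y) (hY0 : ∀ ω, 0 ≤ Y ω) {t : ℝ} (ht : t ≤ 0) :
    Integrable (fun ω ↦ exp (t * Y ω)) P :=
  Integrable.of_bound (by fun_prop) 1 <| ae_of_all _ fun ω ↦ by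
    rw [norm_of_nonneg (exp_pos _).le, exp_le_one_iff]
    exact mul_nonpos_of_nonpos_of_nonneg ht (hY0 ω)

lemma measureReal_sum_le_le_geometric [IsProbabilityMeasure P] {ι : Type*} [Fintype ι]
    {p : unitInterval} (hp : p ≠ 0) {X : ι → Ω → ℕ} (hmeas : ∀ i, Measurable (X i))
    (hindep : iIndepFun X P) (hlaw : ∀ i, P.map (X i) = geometricMeasure p) (a : ℝ) {t : ℝ}
    (ht : t ≤ 0) :
    P.real {ω | ∑ i, (X i ω : ℝ) ≤ a} ≤
      exp (-t * a) * (p / (1 - (1 - p) * exp t)) ^ Fintype.card ι := by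
  set Y : ι → Ω → ℝ := fun i ω ↦ X i ω
  have hYmeas : ∀ i, Measurable (Y i) := fun i ↦ by fun_prop
  have hYindep : iIndepFun Y P := hindep.comp (fun _ n ↦ (n : ℝ)) fun _ ↦ measurable_from_top
  have hsum : ∀ ω, ∑ i, (X i ω : ℝ) = (∑ i, Y i) ω := fun ω ↦
    (Finset.sum_apply ω _ Y).symm
  have htail : (1 - p) * exp t < 1 := by
    calc (1 - p : ℝ) * exp t ≤ 1 - p :=
        mul_le_of_le_one_right (sub_nonneg.2 p.2.2) (exp_le_one_iff.2 ht)
      _ < 1 := sub_lt_self 1 (unitInterval.pos_iff_ne_zero.2 hp)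
  simp_rw [hsum]
  refine (measure_le_le_exp_mul_mgf a ht (integrable_exp_mul_of_nonpos_of_nonneg (by fun_prop)
    (fun ω ↦ ?_) ht)).trans_eq ?_
  · rw [← hsum]; positivity
  rw [hYindep.mgf_sum hYmeas,
    Finset.prod_congr rfl fun i _ ↦
      mgf_natCast_of_map_eq_geometricMeasure hp (hmeas i) (hlaw i) htail,
    Finset.prod_const, Finset.card_univ]

end ProbabilityTheory

theorem geometric_lower_tail
    {Omega : Type*} [MeasurableSpace Omega] (P : Measure Omega) [IsProbabilityMeasure P]
    (p : ℝ) (hp : p ∈ Set.Ioo (0 : ℝ) 1) (n : ℕ)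
    (X : Fin n → Omega → ℕ)
    (hmeas : ∀ i, Measurable (X i))
    (hindep : iIndepFun X P)
    (hdist : ∀ i k, P {omega | X i omega = k} = ENNReal.ofReal (p * (1 - p) ^ k))
    (mu : ℝ) (hmu : mu = (1 - p) / p)
    (lam : ℝ) (hlam : lam ∈ Set.Ioo (0 : ℝ) 1) :
    (P {omega | (∑ i, (X i omega : ℝ)) / n ≤ lam * mu}).toReal ≤
      Real.exp (-(n : ℝ) * (mu * lam * Real.log lam - (1 + mu * lam) * Real.log ((1 + mu * lam) / (1 + mu)))) := by
  obtain ⟨hp0, hp1⟩ := hp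
  obtain ⟨hl0, hl1⟩ := hlam
  let p' : unitInterval := ⟨p, hp0.le, hp1.le⟩
  have hp' : p' ≠ 0 := unitInterval.pos_iff_ne_zero.1 hp0
  set q := p + lam * (1 - p) with hq
  have hq0 : 0 < q := by positivity
  have hlq : lam / q ≤ 1 := (div_le_one hq0).2 (by nlinarith)
  have hmu0 : 0 ≤ lam * mu := by rw [hmu]; exact mul_nonneg hl0.le (div_pos (by linarith) hp0).le
  have hevent : {ω | (∑ i, (X i ω : ℝ)) / n ≤ lam * mu} =
      {ω | ∑ i, (X i ω : ℝ) ≤ n * (lam * mu)} := by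
    ext ω
    rcases n.eq_zero_or_pos with rfl | hn
    · simp [hmu0]
    · rw [Set.mem_ofPred_eq, Set.mem_ofPred_eq, div_le_iff₀ (by positivity), mul_comm]
  have hchernoff := measureReal_sum_le_le_geometric hp' hmeas hindep
    (fun i ↦ map_eq_geometricMeasure hp' (hmeas i) (hdist i)) (n * (lam * mu))
    (log_nonpos (by positivity) hlq)
  have hmgf : p / (1 - (1 - p) * (lam / q)) = q := by
    have hden : 1 - (1 - p) * (lam / q) = p / q := by
      field_simp
      linarith
    rw [hden, div_div_cancel₀ hp0.ne']
  have hratio : (1 + mu * lam) / (1 + mu) = q := by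
    rw [hmu]
    field_simp
    ring
  rw [← measureReal_def, hevent]
  refine hchernoff.trans_eq ?_
  rw [Fintype.card_fin, exp_log (by positivity), hmgf, hratio, log_div hl0.ne' hq0.ne',
    ← exp_log (pow_pos hq0 n), log_pow, ← exp_add]
  ring_nf
end

section
/- For every μ > 0 and every λ ∈ [1,2], the inequality H(λ,μ) ≥ (μ/(4(1+μ)))·(λ−1)² holds, where H(λ,μ) = μλ·ln λ − (1+μλ)·ln((1+μλ)/(1+μ)). -/
open MeasureTheory ProbabilityTheory Real Filter

/-!
`H(·, μ)` vanishes at `1` and has derivative `μ (log λ - log ((1 + μλ)/(1 + μ)))`, which by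
`log t ≥ 1 - 1/t` is at least `μ (λ - 1) / (λ (1 + μ))`. On `[1, b]` this dominates the derivative
`μ (λ - 1) / (b (1 + μ))` of `μ (λ - 1)² / (2b (1 + μ))`, and `b = 2` gives the theorem.
-/

noncomputable def H (mu lam : ℝ) : ℝ :=
  mu * lam * log lam - (1 + mu * lam) * log ((1 + mu * lam) / (1 + mu))

theorem H_one (mu : ℝ) : H mu 1 = 0 := by
  simp [H]

theorem hasDerivAt_H {mu x : ℝ} (hmu : 0 ≤ mu) (hx : 0 < x) :
    HasDerivAt (H mu) (mu * (log x - log ((1 + mu * x) / (1 + mu)))) x := by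
  have hmu1 : 0 < 1 + mu := by linarith
  have hlin : HasDerivAt (fun l => mu * l) mu x := by
    simpa using (hasDerivAt_id x).const_mul mu
  have hratio : HasDerivAt (fun l => (1 + mu * l) / (1 + mu)) (mu / (1 + mu)) x :=
    (hlin.const_add 1).div_const _
  refine ((hlin.mul (hasDerivAt_log hx.ne')).sub
    ((hlin.const_add 1).mul (hratio.log (by positivity)))).congr_deriv ?_
  field_simp
  ring

theorem one_sub_div_le_log_sub_log {x y : ℝ} (hx : 0 < x) (hy : 0 < y) :
    1 - y / x ≤ log x - log y := by
  simpa [log_div hx.ne' hy.ne'] using one_sub_inv_le_log_of_pos (div_pos hx hy)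

theorem le_deriv_H {mu x : ℝ} (hmu : 0 ≤ mu) (hx : 0 < x) :
    mu * (x - 1) / (x * (1 + mu)) ≤ mu * (log x - log ((1 + mu * x) / (1 + mu))) := by
  have hmu1 : 0 < 1 + mu := by linarith
  have key := one_sub_div_le_log_sub_log hx (y := (1 + mu * x) / (1 + mu)) (by positivity)
  calc mu * (x - 1) / (x * (1 + mu)) = mu * (1 - (1 + mu * x) / (1 + mu) / x) := by
        field_simp; ring
    _ ≤ _ := mul_le_mul_of_nonneg_left key hmu

theorem quadratic_le_H_of_mem_Icc {mu lam b : ℝ} (hmu : 0 ≤ mu) (hlam : lam ∈ Set.Icc 1 b) :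
    mu / (2 * b * (1 + mu)) * (lam - 1) ^ 2 ≤ H mu lam := by
  set c := mu / (2 * b * (1 + mu))
  have hderiv {x : ℝ} (hx : 1 ≤ x) : HasDerivAt (fun l => H mu l - c * (l - 1) ^ 2)
      (mu * (log x - log ((1 + mu * x) / (1 + mu))) - c * (2 * (x - 1))) x := by
    refine ((hasDerivAt_H hmu (by linarith)).sub
      (((hasDerivAt_id x).sub_const 1).pow 2 |>.const_mul c)).congr_deriv ?_
    simp
  have hmono : MonotoneOn (fun l => H mu l - c * (l - 1) ^ 2) (Set.Icc 1 b) := by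
    refine monotoneOn_of_hasDerivWithinAt_nonneg (convex_Icc 1 b)
      (f' := fun x => mu * (log x - log ((1 + mu * x) / (1 + mu))) - c * (2 * (x - 1)))
      (fun x hx => (hderiv hx.1).continuousAt.continuousWithinAt) ?_ ?_
    · intro x hx
      rw [interior_Icc] at hx
      exact (hderiv hx.1.le).hasDerivWithinAt
    · intro x hx
      rw [interior_Icc] at hx
      have hx0 : 0 < x := by linarith [hx.1]
      have hmu1 : 0 < 1 + mu := by linarith
      rw [sub_nonneg]
      calc c * (2 * (x - 1)) = mu * (x - 1) / (b * (1 + mu)) := by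
            simp only [c]; field_simp
        _ ≤ mu * (x - 1) / (x * (1 + mu)) := by
            gcongr
            · exact mul_nonneg hmu (by linarith [hx.1])
            · exact hx.2.le
        _ ≤ _ := le_deriv_H hmu hx0
  simpa [H_one] using hmono ⟨le_rfl, hlam.1.trans hlam.2⟩ hlam hlam.1

theorem H_approx_two (mu : ℝ) (hmu : 0 < mu) (lam : ℝ) (hlam : lam ∈ Set.Icc (1 : ℝ) 2) :
    mu / (4 * (1 + mu)) * (lam - 1) ^ 2 ≤ (mu * lam * Real.log lam - (1 + mu * lam) * Real.log ((1 + mu * lam) / (1 + mu))) := by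
  have h := quadratic_le_H_of_mem_Icc hmu.le hlam
  rwa [show (2 : ℝ) * 2 = 4 by norm_num] at h
end

section
/- Let ρ > 0, μ = 1/ρ, and let Y₁,…,Yₙ be independent, identically distributed exponential random variables with density p(y) = ρe^{−ρy} on [0,∞); let Ȳₙ = (Y₁+⋯+Yₙ)/n. Then for every λ ∈ (0,1) and every integer n ≥ 1, Pr[Ȳₙ ≤ λμ] ≥ exp(−n·[G(λ) + ln(2πn)/(2n) + 1/(12n²)]), where G(λ) = λ − 1 − ln λ. -/
/-!
For a rate-`ρ` Poisson process, `Y₁ + ⋯ + Yₙ ≤ t` is the event that at least `n` points fall in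
`[0, t]`, so its probability is at least the Poisson weight `e^{-ρt} (ρt)ⁿ / n!`; we prove this
bound directly, by induction on `n`, integrating out the first coordinate. With `t = nλμ` we have
`ρt = λn`, and Robbins' bound `n! ≤ √(2πn) (n/e)ⁿ e^{1/(12n)}` turns the weight into the stated
exponential.
-/

open MeasureTheory ProbabilityTheory Real Filter Topology Set

open scoped Nat

namespace Stirling

theorem log_stirlingSeq_le {n : ℕ} (hn : n ≠ 0) :
    log (stirlingSeq n) ≤ log √π + 1 / (12 * n) := by
  -- Robbins' bound makes `log (stirlingSeq k) - 1 / (12 k)` increasing for `k ≥ 1`.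
  let a (k : ℕ) : ℝ := log (stirlingSeq (k + 1)) - 1 / (12 * (k + 1 : ℕ))
  have hmono : Monotone a := by
    refine monotone_nat_of_le_succ fun k => ?_
    have hrobbins := log_stirlingSeq_sdiff_le (k + 1)
    have htelescope : (1 : ℝ) / (12 * (k + 1 : ℕ) * ((k + 1 : ℕ) + 1)) =
        1 / (12 * (k + 1 : ℕ)) - 1 / (12 * (k + 1 + 1 : ℕ)) := by
      push_cast; field_simp; ring
    simp only [a]
    linarith
  have hlim : Tendsto a atTop (𝓝 (log √π - 0)) := by
    refine Tendsto.sub ?_ ?_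
    · exact (continuousAt_log (by positivity)).tendsto.comp
        (tendsto_stirlingSeq_sqrt_pi.comp (tendsto_add_atTop_nat 1))
    · simpa only [Function.comp_def, div_div] using
        (tendsto_const_div_atTop_nhds_zero_nat (1 / 12 : ℝ)).comp (tendsto_add_atTop_nat 1)
  obtain ⟨k, rfl⟩ := Nat.exists_eq_succ_of_ne_zero hn
  simpa [a] using hmono.ge_of_tendsto hlim k

theorem log_factorial_le_stirling {n : ℕ} (hn : n ≠ 0) :
    log n ! ≤ n * log n - n + log (2 * π * n) / 2 + 1 / (12 * n) := by
  have hn₀ : (0 : ℝ) < n := by positivity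
  have hs : 0 < stirlingSeq n := (sqrt_pos.mpr pi_pos).trans_le (sqrt_pi_le_stirlingSeq hn)
  have hfac : (n ! : ℝ) = stirlingSeq n * (√(2 * n) * (n / exp 1) ^ n) := by
    rw [stirlingSeq, div_mul_cancel₀]; positivity
  have hsqrt : log √π + log √(2 * n) = log (2 * π * n) / 2 := by
    rw [← log_mul (by positivity) (by positivity), ← sqrt_mul pi_pos.le, log_sqrt (by positivity)]
    ring_nf
  rw [hfac, log_mul hs.ne' (by positivity), log_mul (by positivity) (by positivity), log_pow,
    log_div hn₀.ne' (exp_pos 1).ne', log_exp]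
  linarith [log_stirlingSeq_le hn]

end Stirling

theorem MeasureTheory.Measure.pi_setOf_sum_le_succ {ν : Measure ℝ} [SigmaFinite ν] (n : ℕ)
    (t : ℝ) :
    Measure.pi (fun _ : Fin (n + 1) => ν) {x | ∑ i, x i ≤ t} =
      ∫⁻ y, Measure.pi (fun _ : Fin n => ν) {x | ∑ i, x i ≤ t - y} ∂ν := by
  set B : Set (ℝ × (Fin n → ℝ)) := {p | p.1 + ∑ j, p.2 j ≤ t}
  have hB : MeasurableSet B := measurableSet_le (by fun_prop) measurable_const
  have hpre : {x : Fin (n + 1) → ℝ | ∑ i, x i ≤ t} =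
      MeasurableEquiv.piFinSuccAbove (fun _ => ℝ) 0 ⁻¹' B := by
    ext x
    simp [B, MeasurableEquiv.piFinSuccAbove, Fin.insertNthEquiv, Fin.tail, Fin.sum_univ_succ]
  rw [hpre, (measurePreserving_piFinSuccAbove (fun _ => ν) 0).measure_preimage
    hB.nullMeasurableSet, Measure.prod_apply hB]
  simp only [B, preimage_ofPred_eq, le_sub_iff_add_le']

theorem setLIntegral_exponentialPDF_mul_poisson {ρ t : ℝ} (hρ : 0 < ρ) (ht : 0 ≤ t) (n : ℕ) :
    ∫⁻ y in Icc 0 t, exponentialPDF ρ y *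
        ENNReal.ofReal (exp (-(ρ * (t - y))) * (ρ * (t - y)) ^ n / n !) =
      ENNReal.ofReal (exp (-(ρ * t)) * (ρ * t) ^ (n + 1) / (n + 1)!) := by
  have hintegrand : ∀ y ∈ Icc 0 t, exponentialPDF ρ y *
      ENNReal.ofReal (exp (-(ρ * (t - y))) * (ρ * (t - y)) ^ n / n !) =
        ENNReal.ofReal (exp (-(ρ * t)) * ρ ^ (n + 1) / n ! * (t - y) ^ n) := by
    rintro y ⟨hy0, -⟩
    rw [exponentialPDF_of_nonneg hy0, ← ENNReal.ofReal_mul (by positivity)]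
    congr 1
    have hexp : exp (-(ρ * y)) * exp (-(ρ * (t - y))) = exp (-(ρ * t)) := by
      rw [← exp_add]; ring_nf
    rw [mul_pow, ← hexp]
    ring
  rw [setLIntegral_congr_fun measurableSet_Icc hintegrand, ← ofReal_integral_eq_lintegral_ofReal]
  · rw [integral_Icc_eq_integral_Ioc, ← intervalIntegral.integral_of_le ht,
      intervalIntegral.integral_const_mul, intervalIntegral.integral_comp_sub_left (· ^ n),
      integral_pow, Nat.factorial_succ]
    push_cast
    congr 1
    field_simp
    ring
  · exact (by fun_prop : Continuous fun y => exp (-(ρ * t)) * ρ ^ (n + 1) / n ! * (t - y) ^ n)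
      |>.integrableOn_Icc
  · refine (ae_restrict_iff' measurableSet_Icc).mpr (ae_of_all _ fun y hy => ?_)
    have : 0 ≤ t - y := sub_nonneg.mpr hy.2
    positivity

theorem poisson_le_pi_expMeasure_setOf_sum_le {ρ : ℝ} (hρ : 0 < ρ) (n : ℕ) {t : ℝ}
    (ht : 0 ≤ t) :
    ENNReal.ofReal (exp (-(ρ * t)) * (ρ * t) ^ n / n !) ≤
      Measure.pi (fun _ : Fin n => expMeasure ρ) {x | ∑ i, x i ≤ t} := by
  have := isProbabilityMeasure_expMeasure hρ
  induction n generalizing t with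
  | zero =>
    simp only [Finset.univ_eq_empty, Finset.sum_empty, ht, ofPred_true, measure_univ]
    simpa using exp_le_one_iff.mpr (neg_nonpos.mpr (mul_nonneg hρ.le ht))
  | succ n ih =>
    calc ENNReal.ofReal (exp (-(ρ * t)) * (ρ * t) ^ (n + 1) / (n + 1)!)
        = ∫⁻ y in Icc 0 t, exponentialPDF ρ y *
            ENNReal.ofReal (exp (-(ρ * (t - y))) * (ρ * (t - y)) ^ n / n !) :=
          (setLIntegral_exponentialPDF_mul_poisson hρ ht n).symm
      _ = ∫⁻ y in Icc 0 t,
            ENNReal.ofReal (exp (-(ρ * (t - y))) * (ρ * (t - y)) ^ n / n !) ∂expMeasure ρ :=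
          (setLIntegral_withDensity_eq_setLIntegral_mul _
            (measurable_exponentialPDFReal ρ).ennreal_ofReal (by fun_prop) measurableSet_Icc).symm
      _ ≤ ∫⁻ y in Icc 0 t, Measure.pi (fun _ : Fin n => expMeasure ρ)
            {x | ∑ i, x i ≤ t - y} ∂expMeasure ρ :=
          setLIntegral_mono' measurableSet_Icc fun y hy => ih (sub_nonneg.mpr hy.2)
      _ ≤ _ := setLIntegral_le_lintegral _ _
      _ = _ := (Measure.pi_setOf_sum_le_succ n t).symm

theorem exponential_lower_tail_lower_bound
    {Omega : Type*} [MeasurableSpace Omega] (P : Measure Omega) [IsProbabilityMeasure P]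
    (rho : ℝ) (hrho : 0 < rho) (n : ℕ)
    (Y : Fin n → Omega → ℝ)
    (hmeas : ∀ i, Measurable (Y i))
    (hindep : iIndepFun Y P)
    (hdist : ∀ i, Measure.map (Y i) P = expMeasure rho)
    (mu : ℝ) (hmu : mu = 1 / rho)
    (lam : ℝ) (hlam : lam ∈ Set.Ioo (0 : ℝ) 1) (hn : 1 ≤ n) :
    Real.exp (-(n : ℝ) * ((lam - 1 - Real.log lam) + Real.log (2 * Real.pi * n) / (2 * n)
        + 1 / (12 * (n : ℝ) ^ 2))) ≤
      (P {omega | (∑ i, Y i omega) / n ≤ lam * mu}).toReal := by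
  obtain ⟨hlam0, -⟩ := hlam
  have hn0 : (n : ℝ) ≠ 0 := by positivity
  have hlaw : P.map (fun ω i => Y i ω) = Measure.pi fun _ => expMeasure rho := by
    rw [hindep.map_fun_eq_pi_map fun i => (hmeas i).aemeasurable]
    simp only [hdist]
  have hevent : {ω | (∑ i, Y i ω) / n ≤ lam * mu} =
      (fun ω i => Y i ω) ⁻¹' {x | ∑ i, x i ≤ lam * n / rho} := by
    ext ω
    simp only [mem_ofPred_eq, mem_preimage, hmu, div_le_iff₀ (by positivity : (0 : ℝ) < n)]
    ring_nf
  have hprob : exp (-(lam * n)) * (lam * n) ^ n / n ! ≤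
      (P {ω | (∑ i, Y i ω) / n ≤ lam * mu}).toReal := by
    have := poisson_le_pi_expMeasure_setOf_sum_le hrho n
      (t := lam * n / rho) (by positivity)
    rw [mul_div_cancel₀ _ hrho.ne', ← hlaw, Measure.map_apply (by fun_prop)
      (measurableSet_le (by fun_prop) measurable_const), ← hevent] at this
    exact (ENNReal.ofReal_le_iff_le_toReal (measure_ne_top _ _)).mp this
  refine le_trans ?_ hprob
  rw [← exp_log (by positivity : 0 < exp (-(lam * n)) * (lam * n) ^ n / n !), exp_le_exp,
    log_div (by positivity) (by positivity), log_mul (exp_pos _).ne' (by positivity), log_exp,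
    log_pow, log_mul hlam0.ne' hn0]
  have hexponent :
      -(n : ℝ) * ((lam - 1 - log lam) + log (2 * π * n) / (2 * n) + 1 / (12 * n ^ 2)) =
        -(lam * n) + n * (log lam + log n) -
          (n * log n - n + log (2 * π * n) / 2 + 1 / (12 * n)) := by
    field_simp
    ring
  linarith [Stirling.log_factorial_le_stirling (n := n) (by omega)]
end
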